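/- For every p with 5/6 < p < 1: π₃(y) > y for all y ∈ [0, y₋(p)), π₃(y) < y for all y ∈ (y₋(p), 1/2), π₃(y) > y for all y ∈ (1/2, y₊(p)), and π₃(y) < y for all y ∈ (y₊(p), 1], where y_±(p) = 1/2 ± √(12p² − 16p + 5)/(2(2p−1)). That is, y₋ and y₊ are down-crossings of the diagonal and 1/2 is an up-crossing. -/

import Mathlib

/-- The urn function of the ERW with `k = 3` extractions:
`π₃(y) = (1-p) + (2p-1)(3y² - 2y³)`. -/
noncomputable def pi3 (p y : ℝ) : ℝ :=
  (1 - p) + (2 * p - 1) * (3 * y ^ 2 - 2 * y ^ 3)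

/-- The lower nontrivial fixed point `y₋(p)`. -/
noncomputable def yMinus (p : ℝ) : ℝ :=
  1 / 2 - Real.sqrt (12 * p ^ 2 - 16 * p + 5) / (2 * (2 * p - 1))

/-- The upper nontrivial fixed point `y₊(p)`. -/
noncomputable def yPlus (p : ℝ) : ℝ :=
  1 / 2 + Real.sqrt (12 * p ^ 2 - 16 * p + 5) / (2 * (2 * p - 1))

/-! With `t = y - 1/2` and `r = √(12p² - 16p + 5) / (2(2p - 1))`, one has
`π₃(y) - y = 2(2p - 1) · t · (r² - t²)`, an odd cubic in `t` with roots `-r, 0, r`.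
For `p > 5/6` the leading factor is positive, so the sign of `π₃(y) - y` is read off
the sign pattern `+, -, +, -` of `t (r² - t²)` on the four intervals cut out by its roots. -/

noncomputable def fixedPointRadius (p : ℝ) : ℝ :=
  Real.sqrt (12 * p ^ 2 - 16 * p + 5) / (2 * (2 * p - 1))

lemma yMinus_eq (p : ℝ) : yMinus p = 1 / 2 - fixedPointRadius p := rfl

lemma yPlus_eq (p : ℝ) : yPlus p = 1 / 2 + fixedPointRadius p := rfl

lemma fixedPointRadius_nonneg {p : ℝ} (hp : 1 / 2 < p) : 0 ≤ fixedPointRadius p :=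
  div_nonneg (Real.sqrt_nonneg _) (by linarith)

lemma pi3_sub_self (p y : ℝ) :
    pi3 p y - y = (y - 1 / 2) * ((6 * p - 5) / 2 - 2 * (2 * p - 1) * (y - 1 / 2) ^ 2) := by
  unfold pi3
  ring

/-- Since `12p² - 16p + 5 = (6p - 5)(2p - 1)`, the radius satisfies `2(2p - 1) r² = (6p - 5)/2`. -/
lemma pi3_sub_self_eq_radius {p : ℝ} (hp : 5 / 6 < p) (y : ℝ) :
    pi3 p y - y =
      2 * (2 * p - 1) * ((y - 1 / 2) * (fixedPointRadius p ^ 2 - (y - 1 / 2) ^ 2)) := by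
  have hD : 0 ≤ 12 * p ^ 2 - 16 * p + 5 := by nlinarith
  have hc : 2 * p - 1 ≠ 0 := by linarith
  rw [pi3_sub_self, fixedPointRadius, div_pow, Real.sq_sqrt hD]
  field_simp
  ring

section OddCubic

variable {r t : ℝ}

lemma mul_sq_sub_sq_pos_of_lt_neg (hr : 0 ≤ r) (ht : t < -r) : 0 < t * (r ^ 2 - t ^ 2) :=
  mul_pos_of_neg_of_neg (by linarith) (by nlinarith)

lemma mul_sq_sub_sq_neg_of_neg (h₁ : -r < t) (h₂ : t < 0) : t * (r ^ 2 - t ^ 2) < 0 :=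
  mul_neg_of_neg_of_pos h₂ (by nlinarith)

lemma mul_sq_sub_sq_pos_of_pos (h₁ : 0 < t) (h₂ : t < r) : 0 < t * (r ^ 2 - t ^ 2) :=
  mul_pos h₁ (by nlinarith)

lemma mul_sq_sub_sq_neg_of_lt (hr : 0 ≤ r) (ht : r < t) : t * (r ^ 2 - t ^ 2) < 0 :=
  mul_neg_of_pos_of_neg (by linarith) (by nlinarith)

end OddCubic

theorem stmt_13_general (p : ℝ) (hp0 : 5 / 6 < p) :
    (∀ y : ℝ, 0 ≤ y → y < yMinus p → y < pi3 p y) ∧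
    (∀ y : ℝ, yMinus p < y → y < 1 / 2 → pi3 p y < y) ∧
    (∀ y : ℝ, 1 / 2 < y → y < yPlus p → y < pi3 p y) ∧
    (∀ y : ℝ, yPlus p < y → y ≤ 1 → pi3 p y < y) := by
  have hc : 0 < 2 * (2 * p - 1) := by linarith
  have hr := fixedPointRadius_nonneg (p := p) (by linarith)
  simp only [yMinus_eq, yPlus_eq, ← sub_pos (a := pi3 p _), ← sub_neg (a := pi3 p _),
    pi3_sub_self_eq_radius hp0]
  refine ⟨fun y _ hy => ?_, fun y hy₁ hy₂ => ?_, fun y hy₁ hy₂ => ?_, fun y hy _ => ?_⟩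
  · exact mul_pos hc (mul_sq_sub_sq_pos_of_lt_neg hr (by linarith))
  · exact mul_neg_of_pos_of_neg hc (mul_sq_sub_sq_neg_of_neg (by linarith) (by linarith))
  · exact mul_pos hc (mul_sq_sub_sq_pos_of_pos (by linarith) (by linarith))
  · exact mul_neg_of_pos_of_neg hc (mul_sq_sub_sq_neg_of_lt hr (by linarith))

theorem stmt_13 (p : ℝ) (hp0 : 5 / 6 < p) (hp1 : p < 1) :
    (∀ y : ℝ, 0 ≤ y → y < yMinus p → y < pi3 p y) ∧
    (∀ y : ℝ, yMinus p < y → y < 1 / 2 → pi3 p y < y) ∧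
    (∀ y : ℝ, 1 / 2 < y → y < yPlus p → y < pi3 p y) ∧
    (∀ y : ℝ, yPlus p < y → y ≤ 1 → pi3 p y < y) :=
  stmt_13_general p hp0
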